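/- arXiv:2107.01368 — 2 statements merged into one kernel-verified Lean document; each statement's English description precedes it below -/
import Mathlib

section
/- Let F be an algebraically closed field and d = (d₁,…,dₙ) ∈ ℕⁿ with every dᵢ ≥ 1 and every dᵢ invertible in F. Let P be an A-submodule of Aᵏ. Then P = (P^c)^e (P equals the extension of its contraction to A_dᵏ) if and only if g_ζ(P) = P for every ζ = (ζ₁,…,ζₙ) ∈ (Fˣ)ⁿ with ζᵢ^{dᵢ} = 1 for all i. -/
open scoped BigOperators

set_option synthInstance.maxHeartbeats 1000000
set_option maxHeartbeats 1000000

/-- The ring of Laurent polynomials in `n` variables over `F`: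
the group algebra of the lattice `ℤⁿ`. -/
abbrev LaurentAlg (F : Type*) [Field F] (n : ℕ) : Type _ :=
  AddMonoidAlgebra F (Fin n → ℤ)

/-- The monomial `σ^x`. -/
noncomputable def mono (F : Type*) [Field F] {n : ℕ} (x : Fin n → ℤ) : LaurentAlg F n :=
  AddMonoidAlgebra.single x 1

/-- `A_S`: the `F`-subalgebra of `A` spanned (generated) by the monomials `σ^x`, `x ∈ S`. -/
noncomputable def monoAlg (F : Type*) [Field F] {n : ℕ} (S : AddSubgroup (Fin n → ℤ)) :
    Subalgebra F (LaurentAlg F n) :=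
  Algebra.adjoin F {a : LaurentAlg F n | ∃ x ∈ S, a = mono F x}

/-- The diagonal sublattice `L_d = {x : dᵢ ∣ xᵢ for all i}`. -/
def diagLattice (n : ℕ) (d : Fin n → ℕ) : AddSubgroup (Fin n → ℤ) where
  carrier := {x | ∀ i, (d i : ℤ) ∣ x i}
  zero_mem' := fun i => dvd_zero _
  add_mem' := fun hx hy i => dvd_add (hx i) (hy i)
  neg_mem' := fun hx i => dvd_neg.mpr (hx i)

/-- The coordinatewise inclusion `ι : Bᵏ → Aᵏ` for a subalgebra `B ⊆ A`,
as a `B`-linear map. -/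
noncomputable def inclMap {F : Type*} [Field F] {n : ℕ} (B : Subalgebra F (LaurentAlg F n))
    (k : ℕ) : (Fin k → B) →ₗ[B] (Fin k → LaurentAlg F n) :=
  LinearMap.pi fun i => (Algebra.linearMap B (LaurentAlg F n)).comp (LinearMap.proj i)

/-- The contraction `P^c = P ∩ Bᵏ` of an `A`-submodule `P ⊆ Aᵏ`. -/
noncomputable def contrTo {F : Type*} [Field F] {n : ℕ} (B : Subalgebra F (LaurentAlg F n))
    {k : ℕ} (P : Submodule (LaurentAlg F n) (Fin k → LaurentAlg F n)) :
    Submodule B (Fin k → B) :=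
  Submodule.comap (inclMap B k) (Submodule.restrictScalars B P)

/-- The extension `Q^e ⊆ Aᵏ` of a `B`-submodule `Q ⊆ Bᵏ`: the `A`-submodule generated
by `ι(Q)`. -/
noncomputable def extendTo {F : Type*} [Field F] {n : ℕ} (B : Subalgebra F (LaurentAlg F n))
    {k : ℕ} (Q : Submodule B (Fin k → B)) :
    Submodule (LaurentAlg F n) (Fin k → LaurentAlg F n) :=
  Submodule.span (LaurentAlg F n) (inclMap B k '' Q)

section Aux

open Finsupp

variable {F : Type*} [Field F] {n k : ℕ}

lemma mono_mul (x y : Fin n → ℤ) : mono F x * mono F y = mono F (x + y) := by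
  simp [mono, AddMonoidAlgebra.single_mul_single]

lemma mono_zero : mono F (0 : Fin n → ℤ) = 1 := by
  rw [mono, ← AddMonoidAlgebra.one_def]

/-- The character attached to `ζ`. -/
def chiU (ζ : Fin n → Fˣ) (x : Fin n → ℤ) : Fˣ := ∏ i, ζ i ^ (x i)

lemma chiU_add (ζ : Fin n → Fˣ) (x y : Fin n → ℤ) :
    chiU ζ (x + y) = chiU ζ x * chiU ζ y := by
  simp only [chiU, Pi.add_apply, zpow_add]
  exact Finset.prod_mul_distrib

lemma chiU_zero (ζ : Fin n → Fˣ) : chiU ζ (0 : Fin n → ℤ) = 1 := by simp [chiU]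

lemma chiU_inv (ζ : Fin n → Fˣ) (x : Fin n → ℤ) : chiU ζ⁻¹ x = (chiU ζ x)⁻¹ := by
  simp [chiU, Pi.inv_apply, inv_zpow, Finset.prod_inv_distrib]

/-- The scaling monoid hom used to build `g_ζ`. -/
noncomputable def scaleMonoidHom (ζ : Fin n → Fˣ) :
    Multiplicative (Fin n → ℤ) →* LaurentAlg F n where
  toFun x := ((chiU ζ x.toAdd : Fˣ) : F) • mono F x.toAdd
  map_one' := by
    show ((chiU ζ (0 : Fin n → ℤ) : Fˣ) : F) • mono F (0 : Fin n → ℤ) = 1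
    rw [chiU_zero, mono_zero]; simp
  map_mul' x y := by
    show ((chiU ζ (x.toAdd + y.toAdd) : Fˣ) : F) • mono F (x.toAdd + y.toAdd) = _
    rw [chiU_add, ← mono_mul, Units.val_mul, smul_mul_smul]

/-- The algebra hom `g_ζ`. -/
noncomputable def scaleHom (ζ : Fin n → Fˣ) : LaurentAlg F n →ₐ[F] LaurentAlg F n :=
  (AddMonoidAlgebra.lift F (LaurentAlg F n) (Fin n → ℤ)) (scaleMonoidHom ζ)

lemma scaleHom_mono (ζ : Fin n → Fˣ) (x : Fin n → ℤ) :
    scaleHom ζ (mono F x) = ((chiU ζ x : Fˣ) : F) • mono F x := by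
  rw [scaleHom, mono, AddMonoidAlgebra.lift_single, one_smul]
  rfl

lemma scaleHom_comp_inv (ζ : Fin n → Fˣ) :
    (scaleHom ζ).comp (scaleHom ζ⁻¹) = AlgHom.id F (LaurentAlg F n) := by
  apply AddMonoidAlgebra.algHom_ext
  intro x
  simp only [AlgHom.coe_comp, Function.comp_apply, AlgHom.id_apply]
  show scaleHom ζ (scaleHom ζ⁻¹ (mono F x)) = mono F x
  rw [scaleHom_mono, map_smul, scaleHom_mono, smul_smul, chiU_inv, ← Units.val_mul,
    inv_mul_cancel, Units.val_one, one_smul]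
  exact Subsingleton.elim _ _

/-- The algebra automorphism `g_ζ`. -/
noncomputable def scaleEquiv (ζ : Fin n → Fˣ) : LaurentAlg F n ≃ₐ[F] LaurentAlg F n :=
  AlgEquiv.ofAlgHom (scaleHom ζ) (scaleHom ζ⁻¹) (scaleHom_comp_inv ζ)
    (by simpa using scaleHom_comp_inv ζ⁻¹)

lemma scaleEquiv_mono (ζ : Fin n → Fˣ) (x : Fin n → ℤ) :
    scaleEquiv ζ (mono F x) = ((∏ i, ζ i ^ (x i) : Fˣ) : F) • mono F x :=
  scaleHom_mono ζ x

end Aux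

section Aux2

variable {F : Type*} [Field F] {n k : ℕ}

lemma single_eq_smul_mono (x : Fin n → ℤ) (a : F) :
    AddMonoidAlgebra.single x a = a • mono F x := by
  rw [mono, AddMonoidAlgebra.smul_single', mul_one]

lemma g_single (g : LaurentAlg F n ≃ₐ[F] LaurentAlg F n) (ζ : Fin n → Fˣ)
    (hg : ∀ x : Fin n → ℤ, g (mono F x) = ((∏ i, ζ i ^ (x i) : Fˣ) : F) • mono F x)
    (x : Fin n → ℤ) (a : F) :
    g (AddMonoidAlgebra.single x a) =
      ((∏ i, ζ i ^ (x i) : Fˣ) : F) • AddMonoidAlgebra.single x a := by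
  rw [single_eq_smul_mono, map_smul, hg, smul_comm, ← single_eq_smul_mono]

lemma g_eq_smul_of_support (g : LaurentAlg F n ≃ₐ[F] LaurentAlg F n) (ζ : Fin n → Fˣ)
    (hg : ∀ x : Fin n → ℤ, g (mono F x) = ((∏ i, ζ i ^ (x i) : Fˣ) : F) • mono F x)
    {b : LaurentAlg F n} {c : F}
    (hc : ∀ x ∈ b.coeff.support, ((∏ i, ζ i ^ (x i) : Fˣ) : F) = c) :
    g b = c • b := by
  conv_lhs => rw [← AddMonoidAlgebra.sum_coeff_single b]
  conv_rhs => rw [← AddMonoidAlgebra.sum_coeff_single b, Finsupp.smul_sum]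
  rw [map_finsuppSum]
  refine Finsupp.sum_congr fun x hx => ?_
  rw [g_single g ζ hg, hc x hx]

lemma g_fixes_diag (d : Fin n → ℕ) (g : LaurentAlg F n ≃ₐ[F] LaurentAlg F n) (ζ : Fin n → Fˣ)
    (hζ : ∀ i, ζ i ^ (d i) = 1)
    (hg : ∀ x : Fin n → ℤ, g (mono F x) = ((∏ i, ζ i ^ (x i) : Fˣ) : F) • mono F x)
    {b : LaurentAlg F n} (hb : b ∈ monoAlg F (diagLattice n d)) : g b = b := by
  have hb' : b ∈ Algebra.adjoin F
      {a : LaurentAlg F n | ∃ x ∈ diagLattice n d, a = mono F x} := hb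
  clear hb
  induction hb' using Algebra.adjoin_induction with
  | mem a ha =>
    obtain ⟨x, hx, rfl⟩ := ha
    rw [hg]
    have h1 : (∏ i, ζ i ^ (x i)) = 1 := by
      apply Finset.prod_eq_one
      intro i _
      obtain ⟨c, hc⟩ := hx i
      rw [hc, zpow_mul, zpow_natCast, hζ i, one_zpow]
    rw [h1, Units.val_one, one_smul]
  | algebraMap r => exact g.commutes r
  | add x y hx hy ihx ihy => rw [map_add, ihx, ihy]
  | mul x y hx hy ihx ihy => rw [map_mul, ihx, ihy]

lemma mem_monoAlg_of_support (S : AddSubgroup (Fin n → ℤ)) (a : LaurentAlg F n)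
    (h : ∀ x ∈ a.coeff.support, x ∈ S) : a ∈ monoAlg F S := by
  have ha : a = ∑ x ∈ a.coeff.support, AddMonoidAlgebra.single x (a.coeff x) := by
    conv_lhs => rw [← AddMonoidAlgebra.sum_coeff_single a]
    rfl
  rw [ha]
  refine Subalgebra.sum_mem _ fun x hx => ?_
  rw [single_eq_smul_mono]
  have hmx : mono F x ∈ monoAlg F S := Algebra.subset_adjoin
    (show mono F x ∈ {a : LaurentAlg F n | ∃ y ∈ S, a = mono F y} from ⟨x, h x hx, rfl⟩)
  exact Subalgebra.smul_mem _ hmx _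

lemma map_mem_extend (B : Subalgebra F (LaurentAlg F n))
    (P : Submodule (LaurentAlg F n) (Fin k → LaurentAlg F n))
    (g : LaurentAlg F n ≃ₐ[F] LaurentAlg F n)
    (hfix : ∀ b ∈ B, g b = b) {p : Fin k → LaurentAlg F n}
    (hp : p ∈ extendTo B (contrTo B P)) :
    (fun l => g (p l)) ∈ extendTo B (contrTo B P) := by
  have hp' : p ∈ Submodule.span (LaurentAlg F n)
      ((inclMap B k) '' (contrTo B P : Set (Fin k → B))) := hp
  clear hp
  show (fun l => g (p l)) ∈ Submodule.span (LaurentAlg F n)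
      ((inclMap B k) '' (contrTo B P : Set (Fin k → B)))
  induction hp' using Submodule.span_induction with
  | mem v hv =>
    obtain ⟨q, hq, rfl⟩ := hv
    have h1 : (fun l => g ((inclMap B k) q l)) = (inclMap B k) q := by
      funext l
      exact hfix _ (q l).2
    rw [h1]
    exact Submodule.subset_span ⟨q, hq, rfl⟩
  | zero =>
    have h1 : (fun l => g ((0 : Fin k → LaurentAlg F n) l)) = 0 := by
      funext l; simp
    rw [h1]; exact Submodule.zero_mem _
  | add x y hx hy ihx ihy =>
    have h1 : (fun l => g ((x + y) l)) = (fun l => g (x l)) + (fun l => g (y l)) := by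
      funext l; simp
    rw [h1]; exact Submodule.add_mem _ ihx ihy
  | smul a x hx ihx =>
    have h1 : (fun l => g ((a • x) l)) = g a • fun l => g (x l) := by
      funext l
      simp [smul_eq_mul]
    rw [h1]; exact Submodule.smul_mem _ _ ihx

lemma filter_partition {α M ι : Type*} [AddCommMonoid M] (b : α →₀ M) (s : Finset ι)
    (p : ι → α → Prop) [∀ i, DecidablePred (p i)]
    (h : ∀ x : α, ∃! i, i ∈ s ∧ p i x) :
    ∑ i ∈ s, Finsupp.filter (p i) b = b := by
  ext y
  rw [Finsupp.finset_sum_apply]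
  simp only [Finsupp.filter_apply]
  obtain ⟨i₀, ⟨hi₀, hp₀⟩, hu⟩ := h y
  rw [Finset.sum_eq_single i₀]
  · rw [if_pos hp₀]
  · intro i hi hne
    rw [if_neg]
    intro hpi
    exact hne (hu i ⟨hi, hpi⟩)
  · intro h'
    exact absurd hi₀ h'

/-- Filter of an element of the group algebra. -/
noncomputable def afilter (p : (Fin n → ℤ) → Prop) [DecidablePred p] (b : LaurentAlg F n) :
    LaurentAlg F n :=
  AddMonoidAlgebra.ofCoeff (Finsupp.filter p b.coeff)

lemma coeff_afilter (p : (Fin n → ℤ) → Prop) [DecidablePred p] (b : LaurentAlg F n) :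
    (afilter p b).coeff = Finsupp.filter p b.coeff := rfl

lemma afilter_partition {ι : Type*} (b : LaurentAlg F n) (s : Finset ι)
    (p : ι → (Fin n → ℤ) → Prop) [∀ i, DecidablePred (p i)]
    (h : ∀ x : Fin n → ℤ, ∃! i, i ∈ s ∧ p i x) :
    ∑ i ∈ s, afilter (p i) b = b := by
  apply AddMonoidAlgebra.coeff_injective
  rw [AddMonoidAlgebra.coeff_sum]
  exact filter_partition b.coeff s p h

lemma zpow_congr_of_dvd {M : Type*} [Group M] {D : ℕ} {u : M} (hu : u ^ D = 1) {a b : ℤ}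
    (h : (D : ℤ) ∣ a - b) : u ^ a = u ^ b := by
  obtain ⟨c, hc⟩ := h
  have hab : a = b + (D : ℤ) * c := by linarith
  rw [hab, zpow_add, zpow_mul, zpow_natCast, hu, one_zpow, mul_one]

lemma rootsum {D : ℕ} {ω : F} (hω : IsPrimitiveRoot ω D) (hD : 0 < D) (r : ℕ) :
    ∑ j ∈ Finset.range D, ω ^ (j * r) = if D ∣ r then (D : F) else 0 := by
  have hstep : ∀ j, ω ^ (j * r) = (ω ^ r) ^ j := by
    intro j; rw [mul_comm, pow_mul]
  split_ifs with h
  · have h1 : ∀ j ∈ Finset.range D, ω ^ (j * r) = 1 := by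
      intro j _
      rw [hstep, (hω.pow_eq_one_iff_dvd r).mpr h, one_pow]
    rw [Finset.sum_congr rfl h1, Finset.sum_const, Finset.card_range, nsmul_eq_mul, mul_one]
  · have hne : ω ^ r ≠ 1 := fun he => h ((hω.pow_eq_one_iff_dvd r).mp he)
    have h2 : (∑ j ∈ Finset.range D, (ω ^ r) ^ j) * (ω ^ r - 1) = 0 := by
      rw [geom_sum_mul, ← pow_mul, mul_comm r D, pow_mul, hω.pow_eq_one, one_pow, sub_self]
    rcases mul_eq_zero.mp h2 with h3 | h3
    · rw [Finset.sum_congr rfl fun j _ => hstep j, h3]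
    · exact absurd (sub_eq_zero.mp h3) hne

end Aux2

section Aux3

variable {F : Type*} [Field F] {n k : ℕ}

lemma filter_coord_mem [IsAlgClosed F]
    (d : Fin n → ℕ) (hd : ∀ i, 1 ≤ d i) (hinv : ∀ i, (d i : F) ≠ 0)
    (P : Submodule (LaurentAlg F n) (Fin k → LaurentAlg F n))
    (H : ∀ ζ : Fin n → Fˣ, (∀ i, ζ i ^ (d i) = 1) →
      ∀ g : LaurentAlg F n ≃ₐ[F] LaurentAlg F n,
        (∀ x : Fin n → ℤ, g (mono F x) = ((∏ i, ζ i ^ (x i) : Fˣ) : F) • mono F x) →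
        (fun q : Fin k → LaurentAlg F n => fun i => g (q i)) ''
            (P : Set (Fin k → LaurentAlg F n)) = (P : Set (Fin k → LaurentAlg F n)))
    (i : Fin n) (m : ℕ) (hm : m < d i)
    (p : Fin k → LaurentAlg F n) (hp : p ∈ P) :
    (fun l => afilter (fun x : Fin n → ℤ => x i % (d i : ℤ) = (m : ℤ)) (p l)) ∈ P := by
  set D := d i with hDdef
  have hD : 0 < D := hd i
  have hmD : m < D := hm
  haveI : NeZero ((D : F)) := ⟨hinv i⟩
  obtain ⟨ω, hω⟩ := HasEnoughRootsOfUnity.exists_primitiveRoot F D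
  have hu : IsUnit ω := hω.isUnit hD.ne'
  set ωu := hu.unit with hωu
  have hval : (ωu : F) = ω := hu.unit_spec
  have hωD : ωu ^ D = 1 := by
    ext
    rw [Units.val_pow_eq_pow_val, hval, hω.pow_eq_one, Units.val_one]
  -- the family of tuples of roots of unity
  set ζ : ℕ → (Fin n → Fˣ) := fun j i' => if i' = i then ωu ^ j else 1 with hζdef
  have hζone : ∀ j, ∀ i', (ζ j) i' ^ (d i') = 1 := by
    intro j i'
    by_cases h : i' = i
    · subst h
      simp only [hζdef, if_pos rfl, hDdef]
      rw [← pow_mul, mul_comm, pow_mul, hωD, one_pow]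
    · simp [hζdef, h]
  -- the filter operator
  set filt : ℕ → LaurentAlg F n → LaurentAlg F n :=
    fun m' b => afilter (fun x : Fin n → ℤ => x i % (D : ℤ) = (m' : ℤ)) b with hfilt
  -- scaleEquiv acts on filtered parts by a scalar
  have hchi : ∀ (j m' : ℕ), m' < D → ∀ b : LaurentAlg F n,
      scaleEquiv (ζ j) (filt m' b) = (ω ^ (j * m')) • filt m' b := by
    intro j m' hm' b
    apply g_eq_smul_of_support (scaleEquiv (ζ j)) (ζ j) (fun x => scaleEquiv_mono _ _)
    intro x hx
    have hx' : x i % (D : ℤ) = (m' : ℤ) := by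
      rw [hfilt] at hx
      simp only [coeff_afilter, Finsupp.support_filter, Finset.mem_filter] at hx
      exact hx.2
    have h1 : (∏ i', (ζ j) i' ^ (x i')) = (ωu ^ j) ^ (x i) := by
      rw [Finset.prod_eq_single i]
      · simp [hζdef]
      · intro b' _ hb'; simp [hζdef, hb']
      · simp
    have h2 : (ωu ^ j) ^ (x i) = ωu ^ ((j : ℤ) * x i) := by
      rw [← zpow_natCast ωu j, ← zpow_mul]
    have h3 : ωu ^ ((j : ℤ) * x i) = ωu ^ (((j * m' : ℕ) : ℤ)) := by
      apply zpow_congr_of_dvd hωD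
      have hdvd : (D : ℤ) ∣ (x i - (m' : ℤ)) := Int.dvd_self_sub_of_emod_eq hx'
      have : (j : ℤ) * x i - ((j * m' : ℕ) : ℤ) = (j : ℤ) * (x i - (m' : ℤ)) := by
        push_cast; ring
      rw [this]
      exact Dvd.dvd.mul_left hdvd _
    rw [h1, h2, h3, zpow_natCast, Units.val_pow_eq_pow_val, hval]
  -- partition of any element into filtered parts
  have hpart : ∀ b : LaurentAlg F n, ∑ m' ∈ Finset.range D, filt m' b = b := by
    intro b
    apply afilter_partition
    intro x
    have h0 : 0 ≤ x i % (D : ℤ) := Int.emod_nonneg _ (by exact_mod_cast hD.ne')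
    have h1 : x i % (D : ℤ) < (D : ℤ) := Int.emod_lt_of_pos _ (by exact_mod_cast hD)
    refine ⟨(x i % (D : ℤ)).toNat, ⟨Finset.mem_range.mpr (by omega), by omega⟩, ?_⟩
    rintro m' ⟨hm'1, hm'2⟩
    omega
  -- the averaged vectors
  have hgv : ∀ j : ℕ, j < D → (fun l => scaleEquiv (ζ j) (p l)) ∈ P := by
    intro j _
    have himg := H (ζ j) (hζone j) (scaleEquiv (ζ j)) (fun x => scaleEquiv_mono _ _)
    have h2 := Set.mem_image_of_mem
      (fun q : Fin k → LaurentAlg F n => fun l => scaleEquiv (ζ j) (q l)) hp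
    rw [himg] at h2
    exact h2
  -- the key identity
  have key : ∀ b : LaurentAlg F n,
      ∑ j ∈ Finset.range D, ω ^ (j * (D - m)) • scaleEquiv (ζ j) b
        = (D : F) • filt m b := by
    intro b
    calc ∑ j ∈ Finset.range D, ω ^ (j * (D - m)) • scaleEquiv (ζ j) b
        = ∑ j ∈ Finset.range D, ∑ m' ∈ Finset.range D,
            (ω ^ (j * (D - m)) * ω ^ (j * m')) • filt m' b := by
          refine Finset.sum_congr rfl fun j _ => ?_
          conv_lhs => rw [← hpart b]
          rw [map_sum, Finset.smul_sum]
          refine Finset.sum_congr rfl fun m' hm' => ?_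
          rw [hchi j m' (Finset.mem_range.mp hm') b, smul_smul]
      _ = ∑ m' ∈ Finset.range D, (∑ j ∈ Finset.range D, ω ^ (j * (D - m + m'))) • filt m' b := by
          rw [Finset.sum_comm]
          refine Finset.sum_congr rfl fun m' _ => ?_
          rw [Finset.sum_smul]
          refine Finset.sum_congr rfl fun j _ => ?_
          rw [← pow_add, ← Nat.mul_add]
      _ = (D : F) • filt m b := by
          rw [Finset.sum_eq_single m]
          · have hDm : D - m + m = D := by omega
            have : ∑ j ∈ Finset.range D, ω ^ (j * (D - m + m)) = (D : F) := by
              rw [rootsum hω hD, if_pos (by rw [hDm])]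
            rw [this]
          · intro m' hm' hne
            have hm'D : m' < D := Finset.mem_range.mp hm'
            have hnd : ¬ D ∣ (D - m + m') := by
              intro hdvd
              have h4 : D ∣ (D - m + m') - D := Nat.dvd_sub hdvd dvd_rfl
              have h5 : (D - m + m') - D < D := by omega
              have h6 := Nat.eq_zero_of_dvd_of_lt h4 h5
              have h7 : D ≤ D - m + m' := Nat.le_of_dvd (by omega) hdvd
              omega
            have : ∑ j ∈ Finset.range D, ω ^ (j * (D - m + m')) = 0 := by
              rw [rootsum hω hD, if_neg hnd]
            rw [this, zero_smul]
          · intro h'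
            exact absurd (Finset.mem_range.mpr hmD) h'
  -- assemble
  have hsum : ∑ j ∈ Finset.range D, ω ^ (j * (D - m)) • (fun l => scaleEquiv (ζ j) (p l))
      = (D : F) • (fun l => filt m (p l)) := by
    funext l
    simp only [Finset.sum_apply, Pi.smul_apply]
    exact key (p l)
  have hmem : ((D : F) • (fun l => filt m (p l)) : Fin k → LaurentAlg F n) ∈ P := by
    rw [← hsum]
    refine Submodule.sum_mem _ fun j hj => ?_
    exact Submodule.smul_of_tower_mem _ _ (hgv j (Finset.mem_range.mp hj))
  have hfin : (fun l => filt m (p l))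
      = (D : F)⁻¹ • ((D : F) • (fun l => filt m (p l)) : Fin k → LaurentAlg F n) := by
    rw [smul_smul, inv_mul_cancel₀ (by rw [hDdef]; exact hinv i), one_smul]
  show (fun l => filt m (p l)) ∈ P
  rw [hfin]
  exact Submodule.smul_of_tower_mem _ _ hmem

lemma filter_multi_mem [IsAlgClosed F]
    (d : Fin n → ℕ) (hd : ∀ i, 1 ≤ d i) (hinv : ∀ i, (d i : F) ≠ 0)
    (P : Submodule (LaurentAlg F n) (Fin k → LaurentAlg F n))
    (H : ∀ ζ : Fin n → Fˣ, (∀ i, ζ i ^ (d i) = 1) →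
      ∀ g : LaurentAlg F n ≃ₐ[F] LaurentAlg F n,
        (∀ x : Fin n → ℤ, g (mono F x) = ((∏ i, ζ i ^ (x i) : Fˣ) : F) • mono F x) →
        (fun q : Fin k → LaurentAlg F n => fun i => g (q i)) ''
            (P : Set (Fin k → LaurentAlg F n)) = (P : Set (Fin k → LaurentAlg F n)))
    (s : Finset (Fin n)) (m : Fin n → ℕ) (hm : ∀ i, m i < d i)
    (p : Fin k → LaurentAlg F n) (hp : p ∈ P) :
    (fun l => afilter
        (fun x : Fin n → ℤ => ∀ i ∈ s, x i % (d i : ℤ) = (m i : ℤ)) (p l)) ∈ P := by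
  classical
  induction s using Finset.induction_on with
  | empty =>
    have h1 : (fun l => afilter
        (fun x : Fin n → ℤ => ∀ i ∈ (∅ : Finset (Fin n)), x i % (d i : ℤ) = (m i : ℤ)) (p l))
        = p := by
      funext l
      ext y
      rw [coeff_afilter, Finsupp.filter_apply, if_pos (by simp)]
    rw [h1]
    exact hp
  | insert a s ha ih =>
    have step : (fun l => afilter
        (fun x : Fin n → ℤ => ∀ i ∈ insert a s, x i % (d i : ℤ) = (m i : ℤ)) (p l))
        = fun l => afilter (fun x : Fin n → ℤ => x a % (d a : ℤ) = (m a : ℤ))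
            ((fun l' => afilter
              (fun x : Fin n → ℤ => ∀ i ∈ s, x i % (d i : ℤ) = (m i : ℤ)) (p l')) l) := by
      funext l
      ext y
      simp only [coeff_afilter, Finsupp.filter_apply]
      by_cases h1 : (y a % (d a : ℤ) = (m a : ℤ)) <;>
        by_cases h2 : (∀ i ∈ s, y i % (d i : ℤ) = (m i : ℤ)) <;>
          simp [Finset.forall_mem_insert, h1, h2]
    rw [step]
    exact filter_coord_mem d hd hinv P H a (m a) (hm a) _ ih

lemma shifted_mem (d : Fin n → ℕ)
    (P : Submodule (LaurentAlg F n) (Fin k → LaurentAlg F n))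
    (m : Fin n → ℕ) (v : Fin k → LaurentAlg F n) (hv : v ∈ P)
    (hsupp : ∀ l, ∀ x ∈ (v l).coeff.support, ∀ i, x i % (d i : ℤ) = (m i : ℤ)) :
    v ∈ extendTo (monoAlg F (diagLattice n d)) (contrTo (monoAlg F (diagLattice n d)) P) := by
  set B := monoAlg F (diagLattice n d) with hB
  set mz : Fin n → ℤ := fun i => (m i : ℤ) with hmz
  set w : Fin k → LaurentAlg F n := fun l => mono F (-mz) * v l with hw
  have hwP : w ∈ P := by
    have h1 : w = mono F (-mz) • v := by funext l; rfl
    rw [h1]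
    exact Submodule.smul_mem _ _ hv
  have hwB : ∀ l, w l ∈ B := by
    intro l
    apply mem_monoAlg_of_support
    intro z hz
    have hz' : (v l).coeff (mz + z) ≠ 0 := by
      have h2 := Finsupp.mem_support_iff.mp hz
      rw [hw] at h2
      simp only [mono] at h2
      rwa [AddMonoidAlgebra.coeff_single_mul_apply, one_mul, neg_neg] at h2
    have hpred := hsupp l (mz + z) (Finsupp.mem_support_iff.mpr hz')
    intro i
    have h3 := hpred i
    have hdvd : (d i : ℤ) ∣ ((mz + z) i - (m i : ℤ)) := Int.dvd_self_sub_of_emod_eq h3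
    simpa [hmz, Pi.add_apply, add_sub_cancel_left] using hdvd
  set q : Fin k → B := fun l => ⟨w l, hwB l⟩ with hq
  have hιq : inclMap B k q = w := rfl
  have hqmem : q ∈ contrTo B P := by
    show inclMap B k q ∈ Submodule.restrictScalars B P
    rw [hιq]
    exact hwP
  have hvw : v = mono F mz • inclMap B k q := by
    rw [hιq]
    funext l
    show v l = mono F mz * (mono F (-mz) * v l)
    rw [← mul_assoc, mono_mul, add_neg_cancel, mono_zero, one_mul]
  rw [hvw]
  exact Submodule.smul_mem _ _ (Submodule.subset_span ⟨q, hqmem, rfl⟩)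

end Aux3

/-- `P = (P^c)^e` iff `P` is invariant under all the automorphisms
`g_ζ` with `ζᵢ^{dᵢ} = 1` (acting coordinatewise on `Aᵏ`). -/
theorem extension_of_contraction_iff_diagonal_galois_invariant
    {F : Type*} [Field F] [IsAlgClosed F] {n k : ℕ} (hn : 0 < n) (hk : 1 ≤ k)
    (d : Fin n → ℕ) (hd : ∀ i, 1 ≤ d i) (hinv : ∀ i, (d i : F) ≠ 0)
    (P : Submodule (LaurentAlg F n) (Fin k → LaurentAlg F n)) :
    extendTo (monoAlg F (diagLattice n d)) (contrTo (monoAlg F (diagLattice n d)) P) = P ↔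
      ∀ ζ : Fin n → Fˣ, (∀ i, ζ i ^ (d i) = 1) →
        ∀ g : LaurentAlg F n ≃ₐ[F] LaurentAlg F n,
          (∀ x : Fin n → ℤ, g (mono F x) = ((∏ i, ζ i ^ (x i) : Fˣ) : F) • mono F x) →
          (fun q : Fin k → LaurentAlg F n => fun i => g (q i)) ''
              (P : Set (Fin k → LaurentAlg F n))
            = (P : Set (Fin k → LaurentAlg F n)) := by
  classical
  set B := monoAlg F (diagLattice n d) with hB
  constructor
  · intro hP ζ hζ g hg
    have hfix : ∀ b ∈ B, g b = b := fun b hb => g_fixes_diag d g ζ hζ hg hb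
    have hfix' : ∀ b ∈ B, g.symm b = b := by
      intro b hb
      conv_lhs => rw [← hfix b hb]
      exact g.symm_apply_apply b
    ext q
    simp only [Set.mem_image, SetLike.mem_coe]
    constructor
    · rintro ⟨v, hv, rfl⟩
      rw [← hP] at hv
      have h2 := map_mem_extend B P g hfix hv
      rw [hP] at h2
      exact h2
    · intro hq
      refine ⟨fun l => g.symm (q l), ?_, ?_⟩
      · rw [← hP] at hq
        have h2 := map_mem_extend B P g.symm hfix' hq
        rw [hP] at h2
        exact h2
      · funext l
        show g (g.symm (q l)) = q l
        exact g.apply_symm_apply (q l)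
  · intro H
    apply le_antisymm
    · show Submodule.span (LaurentAlg F n)
        ((inclMap B k) '' (contrTo B P : Set (Fin k → B))) ≤ P
      apply Submodule.span_le.mpr
      rintro _ ⟨q, hq, rfl⟩
      exact hq
    · intro p hp
      have hbox : ∀ m ∈ Fintype.piFinset (fun i => Finset.range (d i)),
          (fun l => afilter
              (fun x : Fin n → ℤ => ∀ i, x i % (d i : ℤ) = ((m : Fin n → ℕ) i : ℤ)) (p l))
            ∈ extendTo B (contrTo B P) := by
        intro m hmbox
        have hm : ∀ i, m i < d i := fun i =>
          Finset.mem_range.mp (Fintype.mem_piFinset.mp hmbox i)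
        have hvP : (fun l => afilter
            (fun x : Fin n → ℤ => ∀ i, x i % (d i : ℤ) = (m i : ℤ)) (p l)) ∈ P := by
          have h2 := filter_multi_mem d hd hinv P H Finset.univ m hm p hp
          have h3 : (fun l => afilter
              (fun x : Fin n → ℤ => ∀ i, x i % (d i : ℤ) = (m i : ℤ)) (p l))
              = (fun l => afilter
                (fun x : Fin n → ℤ => ∀ i ∈ Finset.univ, x i % (d i : ℤ) = (m i : ℤ)) (p l)) := by
            funext l
            ext y
            simp only [coeff_afilter, Finsupp.filter_apply]
            by_cases h : ∀ i, y i % (d i : ℤ) = (m i : ℤ) <;> simp [h]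
          rw [h3]
          exact h2
        apply shifted_mem d P m _ hvP
        intro l x hx
        simp only [coeff_afilter, Finsupp.support_filter, Finset.mem_filter] at hx
        exact hx.2
      have hdecomp : p = ∑ m ∈ Fintype.piFinset (fun i => Finset.range (d i)),
          (fun l => afilter
            (fun x : Fin n → ℤ => ∀ i, x i % (d i : ℤ) = (m i : ℤ)) (p l)) := by
        funext l
        rw [Finset.sum_apply]
        refine (afilter_partition (p l) _ _ ?_).symm
        intro x
        have h0 : ∀ i, 0 ≤ x i % (d i : ℤ) := fun i =>
          Int.emod_nonneg _ (Int.natCast_ne_zero.mpr (Nat.one_le_iff_ne_zero.mp (hd i)))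
        have h1 : ∀ i, x i % (d i : ℤ) < (d i : ℤ) := fun i =>
          Int.emod_lt_of_pos _ (by exact_mod_cast hd i)
        refine ⟨fun i => (x i % (d i : ℤ)).toNat,
          ⟨Fintype.mem_piFinset.mpr fun i => Finset.mem_range.mpr
            (by have := h0 i; have := h1 i; omega),
           fun i => by
             show x i % (d i : ℤ) = ((x i % (d i : ℤ)).toNat : ℤ)
             have := h0 i; omega⟩, ?_⟩
        rintro m' ⟨hm'1, hm'2⟩
        funext i
        show m' i = (x i % (d i : ℤ)).toNat
        have h2 := hm'2 i
        have h3 := h0 i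
        omega
      rw [hdecomp]
      exact Submodule.sum_mem _ hbox
end

section
/- Let F be an algebraically closed field of characteristic zero. Let S be a subgroup of ℤⁿ of full rank (equivalently, the quotient group ℤⁿ/S is finite), and let P be an A-submodule of Aᵏ. Then P = (P^c)^e (P equals the extension of its contraction to A_Sᵏ) if and only if g(P) = P for every F-algebra automorphism g of A that fixes the subalgebra A_S pointwise, where g acts coordinatewise on Aᵏ. -/
open scoped BigOperators

set_option synthInstance.maxHeartbeats 1000000
set_option maxHeartbeats 1000000

section Aux

variable {F : Type*} [Field F] {n : ℕ} (S : AddSubgroup (Fin n → ℤ))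

/-- Membership in `A_S` is characterized by the support being contained in `S`. -/
theorem mem_monoAlg_iff {a : LaurentAlg F n} :
    a ∈ monoAlg F S ↔ ∀ x ∈ a.coeff.support, x ∈ S := by
  classical
  constructor
  · intro ha
    let B : Subalgebra F (LaurentAlg F n) :=
      { carrier := {b : LaurentAlg F n | ∀ x ∈ b.coeff.support, x ∈ S}
        mul_mem' := by
          intro b c hb hc x hx
          obtain ⟨y, hy, z, hz, rfl⟩ := Finset.mem_add.1 (AddMonoidAlgebra.support_coeff_mul_subset b c hx)
          exact S.add_mem (hb y hy) (hc z hz)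
        one_mem' := by
          intro x hx
          have := Finsupp.support_single_subset hx
          simp only [Finset.mem_singleton] at this
          subst this
          exact S.zero_mem
        add_mem' := by
          intro b c hb hc x hx
          rcases Finset.mem_union.1 (Finsupp.support_add hx) with h | h
          · exact hb x h
          · exact hc x h
        zero_mem' := by simp
        algebraMap_mem' := by
          intro r x hx
          have : (algebraMap F (LaurentAlg F n) r) = AddMonoidAlgebra.single 0 r := by
            simp [AddMonoidAlgebra.coe_algebraMap]
          rw [this] at hx
          have := Finsupp.support_single_subset hx
          simp only [Finset.mem_singleton] at this
          subst this
          exact S.zero_mem }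
    have hle : monoAlg F S ≤ B := by
      rw [monoAlg]
      refine Algebra.adjoin_le ?_
      rintro b ⟨x, hx, rfl⟩ y hy
      have := Finsupp.support_single_subset hy
      simp only [Finset.mem_singleton] at this
      subst this
      exact hx
    exact hle ha
  · intro h
    have hrw : a = ∑ x ∈ a.coeff.support, AddMonoidAlgebra.single x (a.coeff x) :=
      (AddMonoidAlgebra.sum_coeff_single a).symm
    rw [hrw]
    refine sum_mem fun x hx => ?_
    have hm : mono F x ∈ monoAlg F S := Algebra.subset_adjoin ⟨x, h x hx, rfl⟩
    have : AddMonoidAlgebra.single x (a.coeff x) = a.coeff x • mono F x := by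
      simp [mono, AddMonoidAlgebra.smul_single]
    rw [this]
    exact Subalgebra.smul_mem _ hm _

variable {S}

/-- The twist algebra homomorphism attached to a character of `ℤⁿ/S`. -/
noncomputable def twistHom (χ : Multiplicative ((Fin n → ℤ) ⧸ S) →* Fˣ) :
    LaurentAlg F n →ₐ[F] LaurentAlg F n :=
  AddMonoidAlgebra.lift F (LaurentAlg F n) (Fin n → ℤ)
    { toFun := fun x =>
        ((χ (Multiplicative.ofAdd (QuotientAddGroup.mk x.toAdd)) : Fˣ) : F) • mono F x.toAdd
      map_one' := by
        simp [mono, AddMonoidAlgebra.one_def]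
      map_mul' := fun x y => by
        simp only [toAdd_mul, mono]
        rw [QuotientAddGroup.mk_add, ofAdd_add, map_mul, smul_mul_smul_comm,
          AddMonoidAlgebra.single_mul_single, one_mul, Units.val_mul] }

theorem twistHom_single (χ : Multiplicative ((Fin n → ℤ) ⧸ S) →* Fˣ) (x : Fin n → ℤ) (r : F) :
    twistHom χ (AddMonoidAlgebra.single x r)
      = AddMonoidAlgebra.single x (((χ (Multiplicative.ofAdd (QuotientAddGroup.mk x)) : Fˣ) : F) * r) := by
  have h := AddMonoidAlgebra.lift_single (R := F) (M := Fin n → ℤ) (A := LaurentAlg F n)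
    { toFun := fun z =>
        ((χ (Multiplicative.ofAdd (QuotientAddGroup.mk z.toAdd)) : Fˣ) : F) • mono F z.toAdd
      map_one' := by simp [mono, AddMonoidAlgebra.one_def]
      map_mul' := fun z y => by
        simp only [toAdd_mul, mono]
        rw [QuotientAddGroup.mk_add, ofAdd_add, map_mul, smul_mul_smul_comm,
          AddMonoidAlgebra.single_mul_single, one_mul, Units.val_mul] } x r
  rw [twistHom]
  rw [h]
  simp only [MonoidHom.coe_mk, OneHom.coe_mk, toAdd_ofAdd, mono]
  rw [smul_smul, AddMonoidAlgebra.smul_single, smul_eq_mul, mul_one, mul_comm]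

theorem twistHom_apply (χ : Multiplicative ((Fin n → ℤ) ⧸ S) →* Fˣ) (f : LaurentAlg F n)
    (y : Fin n → ℤ) :
    (twistHom χ f).coeff y = ((χ (Multiplicative.ofAdd (QuotientAddGroup.mk y)) : Fˣ) : F) * f.coeff y := by
  classical
  induction f using AddMonoidAlgebra.induction with
  | zero => simp
  | single_add x r f hxf hr ih =>
    rw [map_add, AddMonoidAlgebra.coeff_add, Finsupp.add_apply, AddMonoidAlgebra.coeff_add,
      Finsupp.add_apply, ih, twistHom_single, mul_add]
    congr 1
    rw [AddMonoidAlgebra.coeff_single, AddMonoidAlgebra.coeff_single, Finsupp.single_apply,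
      Finsupp.single_apply]
    by_cases hxy : x = y
    · subst hxy; simp
    · simp [hxy]

/-- The twist algebra automorphism attached to a character of `ℤⁿ/S`. -/
noncomputable def twistEquiv (χ : Multiplicative ((Fin n → ℤ) ⧸ S) →* Fˣ) :
    LaurentAlg F n ≃ₐ[F] LaurentAlg F n :=
  AlgEquiv.ofAlgHom (twistHom χ) (twistHom χ⁻¹)
    (AlgHom.ext fun f => AddMonoidAlgebra.ext <| Finsupp.ext fun y => by
      simp only [AlgHom.coe_comp, Function.comp_apply, AlgHom.coe_id, id_eq]
      rw [twistHom_apply, twistHom_apply, ← mul_assoc, ← Units.val_mul,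
        MonoidHom.inv_apply, mul_inv_cancel, Units.val_one, one_mul])
    (AlgHom.ext fun f => AddMonoidAlgebra.ext <| Finsupp.ext fun y => by
      simp only [AlgHom.coe_comp, Function.comp_apply, AlgHom.coe_id, id_eq]
      rw [twistHom_apply, twistHom_apply, ← mul_assoc, ← Units.val_mul,
        MonoidHom.inv_apply, inv_mul_cancel, Units.val_one, one_mul])

theorem twistEquiv_apply (χ : Multiplicative ((Fin n → ℤ) ⧸ S) →* Fˣ) (f : LaurentAlg F n)
    (y : Fin n → ℤ) :
    (twistEquiv χ f).coeff y = ((χ (Multiplicative.ofAdd (QuotientAddGroup.mk y)) : Fˣ) : F) * f.coeff y :=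
  twistHom_apply χ f y

/-- The twist automorphism fixes `A_S` pointwise. -/
theorem twistEquiv_fix (χ : Multiplicative ((Fin n → ℤ) ⧸ S) →* Fˣ) {a : LaurentAlg F n}
    (ha : a ∈ monoAlg F S) : twistEquiv χ a = a := by
  have h := (mem_monoAlg_iff S).1 ha
  refine AddMonoidAlgebra.ext (Finsupp.ext fun y => ?_)
  rw [twistEquiv_apply]
  by_cases hy : a.coeff y = 0
  · rw [hy, mul_zero]
  · have hymem : y ∈ S := h y (Finsupp.mem_support_iff.2 hy)
    rw [(QuotientAddGroup.eq_zero_iff y).2 hymem]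
    simp

end Aux

/-- Coefficientwise action of scalars on Laurent polynomials. -/
theorem LaurentAlg.smul_apply {F : Type*} [Field F] {n : ℕ} (a : F) (f : LaurentAlg F n)
    (x : Fin n → ℤ) : (a • f).coeff x = a * f.coeff x := by
  rw [AddMonoidAlgebra.coeff_smul, Finsupp.smul_apply, smul_eq_mul]

/-- Coefficients of a finite sum of Laurent polynomials. -/
theorem LaurentAlg.sum_apply {F : Type*} [Field F] {n : ℕ} {ι : Type*} (s : Finset ι)
    (f : ι → LaurentAlg F n) (x : Fin n → ℤ) : (∑ i ∈ s, f i).coeff x = ∑ i ∈ s, (f i).coeff x := by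
  rw [AddMonoidAlgebra.coeff_sum, Finsupp.finset_sum_apply]

/-- Orthogonality: the sum of the values of all `Fˣ`-valued characters at a point separated
from `1` by some character vanishes. -/
theorem sum_units_eq_zero {F : Type*} [Field F] {G : Type*} [CommMonoid G] [Fintype (G →* Fˣ)]
    {g : G} (ψ : G →* Fˣ) (hψ : ψ g ≠ 1) :
    ∑ φ : G →* Fˣ, ((φ g : Fˣ) : F) = 0 := by
  have key : ((ψ g : Fˣ) : F) * ∑ φ : G →* Fˣ, ((φ g : Fˣ) : F)
      = ∑ φ : G →* Fˣ, ((φ g : Fˣ) : F) := by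
    rw [Finset.mul_sum]
    exact Fintype.sum_bijective (fun φ => ψ * φ) (Group.mulLeft_bijective ψ) _ _
      (fun φ => by simp)
  have h2 : (((ψ g : Fˣ) : F) - 1) * ∑ φ : G →* Fˣ, ((φ g : Fˣ) : F) = 0 := by
    rw [sub_mul, one_mul, key, sub_self]
  rcases mul_eq_zero.1 h2 with h | h
  · exact absurd (Units.ext (by rw [sub_eq_zero] at h; simpa using h)) hψ
  · exact h

/-- For a full-rank sublattice `S` (over an algebraically closed field of
characteristic zero), `P = (P^c)^e` iff `P` is invariant under every `F`-algebra
automorphism of `A` fixing `A_S` pointwise. -/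
theorem extension_of_contraction_iff_galois_invariant
    {F : Type*} [Field F] [IsAlgClosed F] [CharZero F] {n k : ℕ} (hn : 0 < n) (hk : 1 ≤ k)
    (S : AddSubgroup (Fin n → ℤ)) (hS : Finite ((Fin n → ℤ) ⧸ S))
    (P : Submodule (LaurentAlg F n) (Fin k → LaurentAlg F n)) :
    extendTo (monoAlg F S) (contrTo (monoAlg F S) P) = P ↔
      ∀ g : LaurentAlg F n ≃ₐ[F] LaurentAlg F n,
        (∀ a ∈ monoAlg F S, g a = a) →
        (fun q : Fin k → LaurentAlg F n => fun i => g (q i)) ''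
            (P : Set (Fin k → LaurentAlg F n))
          = (P : Set (Fin k → LaurentAlg F n)) := by
  classical
  have hle : extendTo (monoAlg F S) (contrTo (monoAlg F S) P) ≤ P := by
    rw [extendTo, Submodule.span_le]
    rintro _ ⟨q, hq, rfl⟩
    exact hq
  constructor
  · -- forward direction
    intro hPE g hg
    have key : ∀ (g' : LaurentAlg F n ≃ₐ[F] LaurentAlg F n),
        (∀ a ∈ monoAlg F S, g' a = a) →
        ∀ v ∈ P, (fun i => g' (v i)) ∈ P := by
      intro g' hg' v hv
      rw [← hPE] at hv
      rw [extendTo] at hv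
      induction hv using Submodule.span_induction with
      | mem w hw =>
        obtain ⟨q, hq, rfl⟩ := hw
        have hfix : (fun i => g' (inclMap (monoAlg F S) k q i)) = inclMap (monoAlg F S) k q :=
          funext fun i => hg' _ (q i).2
        rw [hfix]
        exact hq
      | zero =>
        have hrw : (fun i : Fin k => g' ((0 : Fin k → LaurentAlg F n) i)) = 0 := by
          funext i; simp
        rw [hrw]; exact P.zero_mem
      | add x y hx hy ihx ihy =>
        have hrw : (fun i => g' ((x + y) i)) = (fun i => g' (x i)) + fun i => g' (y i) := by
          funext i; simp
        rw [hrw]; exact P.add_mem ihx ihy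
      | smul a x hx ihx =>
        have hrw : (fun i => g' ((a • x) i)) = g' a • fun i => g' (x i) := by
          funext i
          simp [Pi.smul_apply, smul_eq_mul, map_mul]
        rw [hrw]; exact P.smul_mem _ ihx
    apply Set.Subset.antisymm
    · rintro _ ⟨v, hv, rfl⟩
      exact key g hg v hv
    · intro v hv
      refine ⟨fun i => g.symm (v i), key g.symm (fun a ha => ?_) v hv,
        funext fun i => g.apply_symm_apply (v i)⟩
      conv_lhs => rw [← hg a ha]
      exact g.symm_apply_apply a
  · -- backward direction
    intro hinv
    refine le_antisymm hle ?_
    intro v hv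
    letI : Fintype ((Fin n → ℤ) ⧸ S) := Fintype.ofFinite _
    haveI : NeZero ((Monoid.exponent (Multiplicative ((Fin n → ℤ) ⧸ S)) : F)) :=
      ⟨Nat.cast_ne_zero.2 Monoid.exponent_ne_zero_of_finite⟩
    haveI : Fintype (Multiplicative ((Fin n → ℤ) ⧸ S) →* Fˣ) := by
      have e := (CommGroup.monoidHom_mulEquiv_of_hasEnoughRootsOfUnity
        (Multiplicative ((Fin n → ℤ) ⧸ S)) F).some
      exact Fintype.ofEquiv _ e.symm.toEquiv
    have hcard : ((Fintype.card (Multiplicative ((Fin n → ℤ) ⧸ S) →* Fˣ) : F)) ≠ 0 :=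
      Nat.cast_ne_zero.2 Fintype.card_ne_zero
    have hkey : ∀ d : (Fin n → ℤ) ⧸ S,
        ∑ φ : Multiplicative ((Fin n → ℤ) ⧸ S) →* Fˣ, ((φ (Multiplicative.ofAdd d) : Fˣ) : F)
        = if d = 0 then (Fintype.card (Multiplicative ((Fin n → ℤ) ⧸ S) →* Fˣ) : F) else 0 := by
      intro d
      by_cases hd : d = 0
      · subst hd; simp
      · obtain ⟨ψ, hψ⟩ := CommGroup.exists_apply_ne_one_of_hasEnoughRootsOfUnity
          (Multiplicative ((Fin n → ℤ) ⧸ S)) F (a := Multiplicative.ofAdd d) (by simpa using hd)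
        rw [if_neg hd]
        exact sum_units_eq_zero ψ hψ
    -- the Fourier components of v
    set u : ((Fin n → ℤ) ⧸ S) → (Fin k → LaurentAlg F n) := fun c =>
      ((Fintype.card (Multiplicative ((Fin n → ℤ) ⧸ S) →* Fˣ) : F))⁻¹ •
        ∑ φ : Multiplicative ((Fin n → ℤ) ⧸ S) →* Fˣ,
          (((φ (Multiplicative.ofAdd c))⁻¹ : Fˣ) : F) • (fun i => twistEquiv φ (v i)) with hudef
    have hu : ∀ (c : (Fin n → ℤ) ⧸ S) (i : Fin k) (x : Fin n → ℤ),
        (u c i).coeff x = if (QuotientAddGroup.mk x : (Fin n → ℤ) ⧸ S) = c then (v i).coeff x else 0 := by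
      intro c i x
      have expand : (u c i).coeff x
          = (Fintype.card (Multiplicative ((Fin n → ℤ) ⧸ S) →* Fˣ) : F)⁻¹ *
            ∑ φ : Multiplicative ((Fin n → ℤ) ⧸ S) →* Fˣ,
              (((φ (Multiplicative.ofAdd c))⁻¹ : Fˣ) : F) *
                (((φ (Multiplicative.ofAdd (QuotientAddGroup.mk x)) : Fˣ) : F) * (v i).coeff x) := by
        simp only [hudef, Pi.smul_apply, Finset.sum_apply, LaurentAlg.smul_apply,
          LaurentAlg.sum_apply, twistEquiv_apply]
      have hterm : ∀ φ : Multiplicative ((Fin n → ℤ) ⧸ S) →* Fˣ,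
          (((φ (Multiplicative.ofAdd c))⁻¹ : Fˣ) : F) *
              (((φ (Multiplicative.ofAdd (QuotientAddGroup.mk x)) : Fˣ) : F) * (v i).coeff x)
            = ((φ (Multiplicative.ofAdd ((QuotientAddGroup.mk x : (Fin n → ℤ) ⧸ S) - c)) : Fˣ) : F)
                * (v i).coeff x := by
        intro φ
        rw [← mul_assoc, ← Units.val_mul]
        congr 2
        rw [ofAdd_sub, map_div]
        rw [div_eq_mul_inv, mul_comm]
      rw [expand, Finset.sum_congr rfl (fun φ _ => hterm φ), ← Finset.sum_mul, hkey]
      by_cases hxc : (QuotientAddGroup.mk x : (Fin n → ℤ) ⧸ S) = c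
      · rw [if_pos (sub_eq_zero.2 hxc), if_pos hxc, ← mul_assoc, inv_mul_cancel₀ hcard, one_mul]
      · rw [if_neg (fun h => hxc (sub_eq_zero.1 h)), if_neg hxc, zero_mul, mul_zero]
    have humem : ∀ c, u c ∈ P := by
      intro c
      refine Submodule.smul_of_tower_mem _ _
        (Submodule.sum_mem _ fun φ _ => Submodule.smul_of_tower_mem _ _ ?_)
      have himg := hinv (twistEquiv φ) (fun a ha => twistEquiv_fix φ ha)
      have : (fun i => twistEquiv φ (v i)) ∈ (P : Set (Fin k → LaurentAlg F n)) := by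
        rw [← himg]; exact ⟨v, hv, rfl⟩
      exact this
    have hsum : ∑ c : (Fin n → ℤ) ⧸ S, u c = v := by
      refine funext fun i => AddMonoidAlgebra.ext (Finsupp.ext fun x => ?_)
      have h1 : ((∑ c : (Fin n → ℤ) ⧸ S, u c) i).coeff x = ∑ c : (Fin n → ℤ) ⧸ S, (u c i).coeff x := by
        rw [Finset.sum_apply, LaurentAlg.sum_apply]
      rw [h1]
      simp only [hu]
      rw [Finset.sum_ite_eq, if_pos (Finset.mem_univ _)]
    have hext : ∀ c, u c ∈ extendTo (monoAlg F S) (contrTo (monoAlg F S) P) := by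
      intro c
      obtain ⟨xc, hxc⟩ : ∃ xc : Fin n → ℤ, (QuotientAddGroup.mk xc : (Fin n → ℤ) ⧸ S) = c :=
        ⟨c.out, QuotientAddGroup.out_eq' c⟩
      set w : Fin k → LaurentAlg F n := mono F (-xc) • u c with hwdef
      have hwP : w ∈ P := P.smul_mem _ (humem c)
      have hwS : ∀ i, w i ∈ monoAlg F S := by
        intro i
        rw [mem_monoAlg_iff S]
        intro y hy
        rw [Finsupp.mem_support_iff] at hy
        have hwy : (w i).coeff y = (u c i).coeff (xc + y) := by
          show (mono F (-xc) * u c i).coeff y = _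
          rw [mono, AddMonoidAlgebra.coeff_single_mul_apply, one_mul, neg_neg]
        rw [hwy, hu c i (xc + y)] at hy
        by_cases hcc : (QuotientAddGroup.mk (xc + y) : (Fin n → ℤ) ⧸ S) = c
        · have h2 : (QuotientAddGroup.mk xc : (Fin n → ℤ) ⧸ S) + QuotientAddGroup.mk y = c := by
            rw [← QuotientAddGroup.mk_add]; exact hcc
          rw [hxc] at h2
          have h3 : (QuotientAddGroup.mk y : (Fin n → ℤ) ⧸ S) = 0 := by
            have := add_eq_left.1 h2
            exact this
          exact (QuotientAddGroup.eq_zero_iff y).1 h3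
        · rw [if_neg hcc] at hy
          exact absurd rfl hy
      let q : Fin k → monoAlg F S := fun i => ⟨w i, hwS i⟩
      have hq : inclMap (monoAlg F S) k q = w := funext fun i => rfl
      have hqQ : q ∈ contrTo (monoAlg F S) P := by
        show inclMap (monoAlg F S) k q ∈ Submodule.restrictScalars (monoAlg F S) P
        rw [hq]; exact hwP
      have hspan : w ∈ extendTo (monoAlg F S) (contrTo (monoAlg F S) P) := by
        rw [← hq]
        exact Submodule.subset_span ⟨q, hqQ, rfl⟩
      have hufromw : u c = mono F xc • w := by
        funext i
        show u c i = mono F xc * (mono F (-xc) * u c i)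
        rw [← mul_assoc]
        simp only [mono]
        rw [AddMonoidAlgebra.single_mul_single, one_mul, add_neg_cancel,
          ← AddMonoidAlgebra.one_def, one_mul]
      rw [hufromw]
      exact Submodule.smul_mem _ _ hspan
    rw [← hsum]
    exact Submodule.sum_mem _ fun c _ => hext c
end
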